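/- arXiv:2412.06055 — 2 statements merged into one kernel-verified Lean document; each statement's English description precedes it below -/
import Mathlib

section
/- Let M be a Steiner quasigroup generated by a tuple ā with levels S₀ = {entries of ā}, S_{n+1} = {a·b : a,b ∈ Sₙ}. Then Sₙ = {t(ā) : t a reduced term with rk(t) ≤ n}: every element of Sₙ is the value of a reduced term of rank at most n, and every term of rank ≤ n evaluates into Sₙ. -/
/-!
Since `x = x·x`, every level contains the previous one, so the `n`-th level consists exactly of
the values of terms of rank at most `n`. A term is reduced bottom-up without raising its rank or
changing its value: a product `r·s` of reduced terms is either reduced, or one of the identities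
`x·x = x`, `x·(x·y) = y`, `(x·y)·y = x` (up to commutativity, and `∼`-equivalent terms have
equal values) collapses it to `r` or to a factor of `r` or `s`.
-/

/-- A Steiner quasigroup: a commutative, idempotent binary structure
with `x * (x * y) = y`. -/
class Steiner (M : Type) extends Mul M where
  comm : ∀ x y : M, x * y = y * x
  idem : ∀ x : M, x * x = x
  lcancel : ∀ x y : M, x * (x * y) = y

namespace Steiner

variable {M : Type} [Steiner M]

/-- Membership in the subquasigroup generated by `A`. -/
inductive mem_closure (A : Set M) : M → Prop
  | base {a : M} : a ∈ A → mem_closure A a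
  | mul {a b : M} : mem_closure A a → mem_closure A b → mem_closure A (a * b)

/-- The subquasigroup generated by `A`. -/
def closure (A : Set M) : Set M := {x | mem_closure A x}

instance (A : Set M) : Steiner (closure A) where
  mul a b := ⟨a.1 * b.1, a.2.mul b.2⟩
  comm a b := Subtype.ext (Steiner.comm a.1 b.1)
  idem a := Subtype.ext (Steiner.idem a.1)
  lcancel a b := Subtype.ext (Steiner.lcancel a.1 b.1)

/-- `A` is independent: the generated subquasigroup has the universal mapping
property over `A` with respect to the class of Steiner quasigroups. -/
def Independent (A : Set M) : Prop :=
  ∀ (N : Type) [Steiner N] (f : A → N),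
    ∃ g : closure A →ₙ* N, ∀ a : A, g ⟨a.1, mem_closure.base a.2⟩ = f a

/-- A tuple is independent if its entries are pairwise distinct and its
range is an independent set. -/
def IndepTuple {ι : Type} (a : ι → M) : Prop :=
  Function.Injective a ∧ Independent (Set.range a)

/-- `A` is a free base of `M`: it generates `M` and `M` has the universal
mapping property over `A`. -/
def FreeBase (A : Set M) : Prop :=
  closure A = Set.univ ∧
  ∀ (N : Type) [Steiner N] (f : A → N),
    ∃ g : M →ₙ* N, ∀ a : A, g a.1 = f a

/-- Terms in the language with one binary operation. -/
inductive Term (α : Type) where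
  | var : α → Term α
  | mul : Term α → Term α → Term α

/-- Evaluation of a term at an assignment. -/
def Term.eval {α : Type} (e : α → M) : Term α → M
  | .var x => e x
  | .mul t s => t.eval e * s.eval e

/-- Equivalence of terms generated by applications of commutativity to subterms. -/
inductive TEquiv {α : Type} : Term α → Term α → Prop
  | refl (t : Term α) : TEquiv t t
  | symm {t s : Term α} : TEquiv t s → TEquiv s t
  | trans {t s u : Term α} : TEquiv t s → TEquiv s u → TEquiv t u
  | comm (t s : Term α) : TEquiv (.mul t s) (.mul s t)
  | congr {t t' s s' : Term α} : TEquiv t t' → TEquiv s s' →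
      TEquiv (.mul t s) (.mul t' s')

/-- The subterm relation. -/
inductive Subterm {α : Type} : Term α → Term α → Prop
  | refl (t : Term α) : Subterm t t
  | left {s t r : Term α} : Subterm s t → Subterm s (.mul t r)
  | right {s t r : Term α} : Subterm s t → Subterm s (.mul r t)

/-- A term is reduced if it contains no subterm of the forms `t₁·t₂` with
`t₁ ∼ t₂`, `t₁·(t₂·t₃)` with `t₁ ∼ t₂` or `t₁ ∼ t₃`, or `(t₁·t₂)·t₃` with
`t₁ ∼ t₃` or `t₂ ∼ t₃`. -/
def Reduced {α : Type} (t : Term α) : Prop :=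
  (∀ t1 t2 : Term α, Subterm (.mul t1 t2) t → ¬ TEquiv t1 t2) ∧
  (∀ t1 t2 t3 : Term α, Subterm (.mul t1 (.mul t2 t3)) t →
      ¬ TEquiv t1 t2 ∧ ¬ TEquiv t1 t3) ∧
  (∀ t1 t2 t3 : Term α, Subterm (.mul (.mul t1 t2) t3) t →
      ¬ TEquiv t1 t3 ∧ ¬ TEquiv t2 t3)

/-- The rank of a term. -/
def Term.rank {α : Type} : Term α → ℕ
  | .var _ => 0
  | .mul t s => max t.rank s.rank + 1

/-- Number of occurrences of a variable in a term. -/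
def Term.occ {α : Type} [DecidableEq α] (x : α) : Term α → ℕ
  | .var y => if y = x then 1 else 0
  | .mul t s => t.occ x + s.occ x

/-- The variable `x` occurs in the term. -/
inductive Occurs {α : Type} (x : α) : Term α → Prop
  | var : Occurs x (.var x)
  | left {t s : Term α} : Occurs x t → Occurs x (.mul t s)
  | right {t s : Term α} : Occurs x s → Occurs x (.mul t s)

/-- The levels of `M` over `A`. -/
def level (A : Set M) : ℕ → Set M
  | 0 => A
  | n + 1 => {z | ∃ a ∈ level A n, ∃ b ∈ level A n, z = a * b}

/-- `S` is a standard free construction over `A`. -/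
def StdFree (A : Set M) (S : ℕ → Set M) : Prop :=
  S 0 = A ∧
  (∀ n, S (n + 1) = {z | ∃ a ∈ S n, ∃ b ∈ S n, z = a * b}) ∧
  (∀ a ∈ S 0, ∀ b ∈ S 0, a ≠ b → a * b ∉ S 0) ∧
  (∀ n, ∀ a ∈ S (n + 1), a ∉ S n → ∀ b ∈ S (n + 1), b ∉ S n → a ≠ b →
    a * b ∉ S (n + 1)) ∧
  (∀ n, ∀ a ∈ S (n + 1), a ∉ S n → ∃ b ∈ S n, ∃ c ∈ S n, b ≠ c ∧ a = b * c ∧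
    ∀ b' ∈ S n, ∀ c' ∈ S n, b' ≠ c' → a = b' * c' → ({b', c'} : Set M) = {b, c})

theorem eval_mem_closure {α : Type} {A : Set M} (e : α → M) (h : ∀ x, e x ∈ A) :
    ∀ t : Term α, t.eval e ∈ closure A
  | .var x => mem_closure.base (h x)
  | .mul t s => mem_closure.mul (eval_mem_closure e h t) (eval_mem_closure e h s)

end Steiner

namespace Steiner

variable {M : Type} [Steiner M] {α : Type}

theorem mul_mul_cancel_left' (x y : M) : y * (x * y) = x := by
  rw [comm x y, lcancel]

theorem mul_mul_cancel_right (x y : M) : x * y * y = x := by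
  rw [comm, mul_mul_cancel_left']

theorem mul_mul_cancel_right' (x y : M) : x * y * x = y := by
  rw [comm, lcancel]

theorem TEquiv.eval_eq (e : α → M) {t s : Term α} (h : TEquiv t s) : t.eval e = s.eval e := by
  induction h with
  | refl => rfl
  | symm _ ih => exact ih.symm
  | trans _ _ ih₁ ih₂ => exact ih₁.trans ih₂
  | comm => exact Steiner.comm _ _
  | congr _ _ ih₁ ih₂ => exact congrArg₂ (· * ·) ih₁ ih₂

theorem Subterm.trans {r s t : Term α} (h₁ : Subterm r s) (h₂ : Subterm s t) : Subterm r t := by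
  induction h₂ with
  | refl => exact h₁
  | left _ ih => exact .left ih
  | right _ ih => exact .right ih

theorem Reduced.of_subterm {s t : Term α} (h : Reduced t) (hs : Subterm s t) : Reduced s :=
  ⟨fun t₁ t₂ h' => h.1 t₁ t₂ (h'.trans hs),
   fun t₁ t₂ t₃ h' => h.2.1 t₁ t₂ t₃ (h'.trans hs),
   fun t₁ t₂ t₃ h' => h.2.2 t₁ t₂ t₃ (h'.trans hs)⟩

theorem Reduced.var (x : α) : Reduced (Term.var x) :=
  ⟨fun _ _ h => (nomatch h), fun _ _ _ h => (nomatch h), fun _ _ _ h => (nomatch h)⟩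

theorem Reduced.mul {r s : Term α} (hr : Reduced r) (hs : Reduced s) (hrs : ¬ TEquiv r s)
    (hright : ∀ u v, s = .mul u v → ¬ TEquiv r u ∧ ¬ TEquiv r v)
    (hleft : ∀ u v, r = .mul u v → ¬ TEquiv u s ∧ ¬ TEquiv v s) :
    Reduced (.mul r s) := by
  refine ⟨fun t₁ t₂ h => ?_, fun t₁ t₂ t₃ h => ?_, fun t₁ t₂ t₃ h => ?_⟩
  · cases h with
    | refl => exact hrs
    | left h => exact hr.1 t₁ t₂ h
    | right h => exact hs.1 t₁ t₂ h
  · cases h with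
    | refl => exact hright t₂ t₃ rfl
    | left h => exact hr.2.1 t₁ t₂ t₃ h
    | right h => exact hs.2.1 t₁ t₂ t₃ h
  · cases h with
    | refl => exact hleft t₁ t₂ rfl
    | left h => exact hr.2.2 t₁ t₂ t₃ h
    | right h => exact hs.2.2 t₁ t₂ t₃ h

theorem exists_reduced_eval_eq_mul (e : α → M) {r s : Term α} (hr : Reduced r)
    (hs : Reduced s) :
    ∃ t : Term α, Reduced t ∧ t.rank ≤ (Term.mul r s).rank ∧ t.eval e = r.eval e * s.eval e := by
  by_cases hrs : TEquiv r s
  · exact ⟨r, hr, by simp only [Term.rank]; omega, by rw [← hrs.eval_eq e, idem]⟩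
  by_cases hright : ∃ u v, s = .mul u v ∧ (TEquiv r u ∨ TEquiv r v)
  · obtain ⟨u, v, rfl, hu | hv⟩ := hright
    · refine ⟨v, hs.of_subterm (.right (.refl v)), by simp only [Term.rank]; omega, ?_⟩
      simp only [Term.eval]
      rw [hu.eval_eq e, lcancel]
    · refine ⟨u, hs.of_subterm (.left (.refl u)), by simp only [Term.rank]; omega, ?_⟩
      simp only [Term.eval]
      rw [hv.eval_eq e, mul_mul_cancel_left']
  by_cases hleft : ∃ u v, r = .mul u v ∧ (TEquiv u s ∨ TEquiv v s)
  · obtain ⟨u, v, rfl, hu | hv⟩ := hleft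
    · refine ⟨v, hr.of_subterm (.right (.refl v)), by simp only [Term.rank]; omega, ?_⟩
      simp only [Term.eval]
      rw [← hu.eval_eq e, mul_mul_cancel_right']
    · refine ⟨u, hr.of_subterm (.left (.refl u)), by simp only [Term.rank]; omega, ?_⟩
      simp only [Term.eval]
      rw [← hv.eval_eq e, mul_mul_cancel_right]
  push Not at hright hleft
  exact ⟨.mul r s, hr.mul hs hrs hright hleft, le_rfl, rfl⟩

theorem exists_reduced_eval_eq (e : α → M) (t : Term α) :
    ∃ r : Term α, Reduced r ∧ r.rank ≤ t.rank ∧ r.eval e = t.eval e := by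
  induction t with
  | var x => exact ⟨.var x, .var x, le_rfl, rfl⟩
  | mul t s iht ihs =>
    obtain ⟨r, hr, hrt, hre⟩ := iht
    obtain ⟨r', hr', hrs, hre'⟩ := ihs
    obtain ⟨u, hu, hur, hue⟩ := exists_reduced_eval_eq_mul e hr hr'
    refine ⟨u, hu, hur.trans ?_, hue.trans (congrArg₂ (· * ·) hre hre')⟩
    simp only [Term.rank]
    omega

theorem level_subset_succ (A : Set M) (n : ℕ) : level A n ⊆ level A (n + 1) :=
  fun x hx => ⟨x, hx, x, hx, (idem x).symm⟩

theorem level_monotone (A : Set M) : Monotone (level A) :=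
  monotone_nat_of_le_succ (level_subset_succ A)

theorem eval_mem_level {ι : Type} (a : ι → M) :
    ∀ (t : Term ι) {n : ℕ}, t.rank ≤ n → t.eval a ∈ level (Set.range a) n
  | .var i, n, _ => level_monotone _ (Nat.zero_le n) ⟨i, rfl⟩
  | .mul t s, n + 1, h => by
    simp only [Term.rank] at h
    exact ⟨_, eval_mem_level a t (by omega), _, eval_mem_level a s (by omega), rfl⟩
  | .mul _ _, 0, h => absurd h (by simp only [Term.rank]; omega)

theorem exists_eval_eq_of_mem_level {ι : Type} (a : ι → M) {n : ℕ} {x : M}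
    (hx : x ∈ level (Set.range a) n) : ∃ t : Term ι, t.rank ≤ n ∧ t.eval a = x := by
  induction n generalizing x with
  | zero =>
    obtain ⟨i, rfl⟩ := hx
    exact ⟨.var i, le_rfl, rfl⟩
  | succ n ih =>
    obtain ⟨y, hy, z, hz, rfl⟩ := hx
    obtain ⟨t, ht, rfl⟩ := ih hy
    obtain ⟨s, hs, rfl⟩ := ih hz
    exact ⟨.mul t s, by simp only [Term.rank]; omega, rfl⟩

theorem level_range_eq {ι : Type} (a : ι → M) (n : ℕ) :
    level (Set.range a) n = {x : M | ∃ t : Term ι, t.rank ≤ n ∧ t.eval a = x} :=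
  Set.ext fun _ => ⟨exists_eval_eq_of_mem_level a, fun ⟨t, ht, hx⟩ => hx ▸ eval_mem_level a t ht⟩

end Steiner

open Steiner
theorem stmt13_general {M : Type} [Steiner M] {ι : Type} (a : ι → M)
    (n : ℕ) :
    level (Set.range a) n =
      {x : M | ∃ t : Term ι, Reduced t ∧ t.rank ≤ n ∧ t.eval a = x} ∧
    level (Set.range a) n =
      {x : M | ∃ t : Term ι, t.rank ≤ n ∧ t.eval a = x} := by
  refine ⟨?_, level_range_eq a n⟩
  rw [level_range_eq]
  ext x
  constructor
  · rintro ⟨t, ht, rfl⟩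
    obtain ⟨r, hr, hrt, hre⟩ := exists_reduced_eval_eq a t
    exact ⟨r, hr, hrt.trans ht, hre⟩
  · rintro ⟨t, -, ht, rfl⟩
    exact ⟨t, ht, rfl⟩

/-- The levels over a generating tuple are exactly the values of (reduced)
terms of bounded rank. -/
theorem stmt13 {M : Type} [Steiner M] {ι : Type} (a : ι → M)
    (hgen : closure (Set.range a) = Set.univ) (n : ℕ) :
    level (Set.range a) n =
      {x : M | ∃ t : Term ι, Reduced t ∧ t.rank ≤ n ∧ t.eval a = x} ∧
    level (Set.range a) n =
      {x : M | ∃ t : Term ι, t.rank ≤ n ∧ t.eval a = x} :=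
  stmt13_general a n
end

section
/- A tuple ā in a Steiner quasigroup is independent if and only if t(ā) ≠ r(ā) for all reduced terms t, r with t ≁ r. -/
open Steiner

section Aux

variable {α : Type}

/-- Recursive characterization of equivalence modulo commutativity. -/
def teq : Term α → Term α → Prop
  | .var x, .var y => x = y
  | .mul a b, .mul c d => (teq a c ∧ teq b d) ∨ (teq a d ∧ teq b c)
  | _, _ => False

lemma teq_refl : ∀ t : Term α, teq t t
  | .var _ => rfl
  | .mul a b => Or.inl ⟨teq_refl a, teq_refl b⟩

lemma teq_symm : ∀ {t s : Term α}, teq t s → teq s t := by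
  intro t
  induction t with
  | var x => intro s h; cases s with
    | var y => exact (h : x = y).symm
    | mul c d => exact h.elim
  | mul a b iha ihb => intro s h; cases s with
    | var y => exact h.elim
    | mul c d =>
      rcases h with ⟨h1, h2⟩ | ⟨h1, h2⟩
      · exact Or.inl ⟨iha h1, ihb h2⟩
      · exact Or.inr ⟨ihb h2, iha h1⟩

lemma teq_trans : ∀ {t s u : Term α}, teq t s → teq s u → teq t u := by
  intro t
  induction t with
  | var x => intro s u h1 h2; cases s with
    | var y => cases u with
      | var z => exact (h1 : x = y).trans (h2 : y = z)
      | mul _ _ => exact h2.elim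
    | mul c d => exact h1.elim
  | mul a b iha ihb =>
    intro s u h1 h2
    cases s with
    | var y => exact h1.elim
    | mul c d =>
      cases u with
      | var z => exact h2.elim
      | mul e f =>
        rcases h1 with ⟨p1, p2⟩ | ⟨p1, p2⟩ <;> rcases h2 with ⟨q1, q2⟩ | ⟨q1, q2⟩
        · exact Or.inl ⟨iha p1 q1, ihb p2 q2⟩
        · exact Or.inr ⟨iha p1 q1, ihb p2 q2⟩
        · exact Or.inr ⟨iha p1 q2, ihb p2 q1⟩
        · exact Or.inl ⟨iha p1 q2, ihb p2 q1⟩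

lemma teq_eval {M : Type} [Steiner M] (e : α → M) :
    ∀ {t s : Term α}, teq t s → t.eval e = s.eval e := by
  intro t
  induction t with
  | var x => intro s h; cases s with
    | var y => cases (h : x = y); rfl
    | mul _ _ => exact h.elim
  | mul a b iha ihb =>
    intro s h
    cases s with
    | var y => exact h.elim
    | mul c d =>
      rcases h with ⟨h1, h2⟩ | ⟨h1, h2⟩
      · show a.eval e * b.eval e = c.eval e * d.eval e
        rw [iha h1, ihb h2]
      · show a.eval e * b.eval e = c.eval e * d.eval e
        rw [iha h1, ihb h2, Steiner.comm]

lemma teq_rank : ∀ {t s : Term α}, teq t s → t.rank = s.rank := by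
  intro t
  induction t with
  | var x => intro s h; cases s with
    | var y => rfl
    | mul _ _ => exact h.elim
  | mul a b iha ihb =>
    intro s h
    cases s with
    | var y => exact h.elim
    | mul c d =>
      rcases h with ⟨h1, h2⟩ | ⟨h1, h2⟩
      · show max a.rank b.rank + 1 = max c.rank d.rank + 1
        rw [iha h1, ihb h2]
      · show max a.rank b.rank + 1 = max c.rank d.rank + 1
        rw [iha h1, ihb h2, Nat.max_comm]

lemma tequiv_of_teq : ∀ {t s : Term α}, teq t s → TEquiv t s := by
  intro t
  induction t with
  | var x => intro s h; cases s with
    | var y => cases (h : x = y); exact TEquiv.refl _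
    | mul _ _ => exact h.elim
  | mul a b iha ihb =>
    intro s h
    cases s with
    | var y => exact h.elim
    | mul c d =>
      rcases h with ⟨h1, h2⟩ | ⟨h1, h2⟩
      · exact TEquiv.congr (iha h1) (ihb h2)
      · exact TEquiv.trans (TEquiv.congr (iha h1) (ihb h2)) (TEquiv.comm d c)

lemma teq_of_tequiv : ∀ {t s : Term α}, TEquiv t s → teq t s := by
  intro t s h
  induction h with
  | refl t => exact teq_refl t
  | symm _ ih => exact teq_symm ih
  | trans _ _ ih1 ih2 => exact teq_trans ih1 ih2
  | comm t s => exact Or.inr ⟨teq_refl t, teq_refl s⟩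
  | congr _ _ ih1 ih2 => exact Or.inl ⟨ih1, ih2⟩

lemma teq_pair {a b c d : Term α} (h : teq (.mul a b) (.mul c d)) :
    (teq a c ∧ teq b d) ∨ (teq a d ∧ teq b c) := h

/-! ### Subterm inversion and reducedness -/

lemma subterm_var {u : Term α} {x : α} (h : Subterm u (.var x)) : u = .var x := by
  cases h; rfl

lemma subterm_mul {u t s : Term α} (h : Subterm u (.mul t s)) :
    u = .mul t s ∨ Subterm u t ∨ Subterm u s := by
  cases h with
  | refl => exact Or.inl rfl
  | left h => exact Or.inr (Or.inl h)
  | right h => exact Or.inr (Or.inr h)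

lemma reduced_var (x : α) : Reduced (Term.var x) := by
  refine ⟨?_, ?_, ?_⟩
  · intro t1 t2 h; exact nomatch (subterm_var h)
  · intro t1 t2 t3 h; exact nomatch (subterm_var h)
  · intro t1 t2 t3 h; exact nomatch (subterm_var h)

lemma Steiner.Reduced.left {t s : Term α} (h : Reduced (.mul t s)) : Reduced t :=
  ⟨fun t1 t2 hs => h.1 t1 t2 hs.left, fun t1 t2 t3 hs => h.2.1 t1 t2 t3 hs.left,
   fun t1 t2 t3 hs => h.2.2 t1 t2 t3 hs.left⟩

lemma Steiner.Reduced.right {t s : Term α} (h : Reduced (.mul t s)) : Reduced s :=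
  ⟨fun t1 t2 hs => h.1 t1 t2 hs.right, fun t1 t2 t3 hs => h.2.1 t1 t2 t3 hs.right,
   fun t1 t2 t3 hs => h.2.2 t1 t2 t3 hs.right⟩

lemma Steiner.Reduced.ne {t s : Term α} (h : Reduced (.mul t s)) : ¬ teq t s :=
  fun hq => h.1 t s (Subterm.refl _) (tequiv_of_teq hq)

lemma Steiner.Reduced.r2 {t s1 s2 : Term α} (h : Reduced (.mul t (.mul s1 s2))) :
    ¬ teq t s1 ∧ ¬ teq t s2 := by
  have := h.2.1 t s1 s2 (Subterm.refl _)
  exact ⟨fun hq => this.1 (tequiv_of_teq hq), fun hq => this.2 (tequiv_of_teq hq)⟩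

lemma Steiner.Reduced.r3 {t1 t2 s : Term α} (h : Reduced (.mul (.mul t1 t2) s)) :
    ¬ teq t1 s ∧ ¬ teq t2 s := by
  have := h.2.2 t1 t2 s (Subterm.refl _)
  exact ⟨fun hq => this.1 (tequiv_of_teq hq), fun hq => this.2 (tequiv_of_teq hq)⟩

lemma reduced_mul {t s : Term α} (ht : Reduced t) (hs : Reduced s) (h1 : ¬ teq t s)
    (h2 : ∀ s1 s2, s = .mul s1 s2 → ¬ teq t s1 ∧ ¬ teq t s2)
    (h3 : ∀ t1 t2, t = .mul t1 t2 → ¬ teq t1 s ∧ ¬ teq t2 s) :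
    Reduced (.mul t s) := by
  refine ⟨?_, ?_, ?_⟩
  · intro u1 u2 h
    rcases subterm_mul h with heq | h | h
    · injection heq with e1 e2
      subst e1; subst e2
      exact fun hq => h1 (teq_of_tequiv hq)
    · exact ht.1 _ _ h
    · exact hs.1 _ _ h
  · intro u1 u2 u3 h
    rcases subterm_mul h with heq | h | h
    · injection heq with e1 e2
      subst e1
      have := h2 u2 u3 e2.symm
      exact ⟨fun hq => this.1 (teq_of_tequiv hq), fun hq => this.2 (teq_of_tequiv hq)⟩
    · exact ht.2.1 _ _ _ h
    · exact hs.2.1 _ _ _ h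
  · intro u1 u2 u3 h
    rcases subterm_mul h with heq | h | h
    · injection heq with e1 e2
      subst e2
      have := h3 u1 u2 e1.symm
      exact ⟨fun hq => this.1 (teq_of_tequiv hq), fun hq => this.2 (teq_of_tequiv hq)⟩
    · exact ht.2.2 _ _ _ h
    · exact hs.2.2 _ _ _ h

/-! ### One-step reduced multiplication -/

open Classical in
/-- `half t s = some u` when `s` is a product one of whose factors is
equivalent to `t`, in which case `u` is the other factor. -/
noncomputable def half : Term α → Term α → Option (Term α)
  | t, .mul s1 s2 => if teq t s1 then some s2 else if teq t s2 then some s1 else none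
  | _, .var _ => none

lemma half_var {t : Term α} {x : α} : half t (.var x) = none := rfl

lemma half_pos1 {t s1 s2 : Term α} (h : teq t s1) : half t (.mul s1 s2) = some s2 := by
  simp [half, h]

lemma half_pos2 {t s1 s2 : Term α} (h1 : ¬ teq t s1) (h2 : teq t s2) :
    half t (.mul s1 s2) = some s1 := by
  simp [half, h1, h2]

lemma half_neg {t s1 s2 : Term α} (h1 : ¬ teq t s1) (h2 : ¬ teq t s2) :
    half t (.mul s1 s2) = none := by
  simp [half, h1, h2]

lemma half_some {t s u : Term α} (h : half t s = some u) :
    ∃ s1 s2, s = .mul s1 s2 ∧ ((teq t s1 ∧ u = s2) ∨ (teq t s2 ∧ u = s1)) := by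
  cases s with
  | var x => simp [half] at h
  | mul s1 s2 =>
    refine ⟨s1, s2, rfl, ?_⟩
    by_cases h1 : teq t s1
    · rw [half_pos1 h1] at h
      exact Or.inl ⟨h1, (Option.some.injEq _ _ ▸ h).symm⟩
    · by_cases h2 : teq t s2
      · rw [half_pos2 h1 h2] at h
        exact Or.inr ⟨h2, (Option.some.injEq _ _ ▸ h).symm⟩
      · rw [half_neg h1 h2] at h; cases h

lemma half_none {t s1 s2 : Term α} (h : half t (.mul s1 s2) = none) :
    ¬ teq t s1 ∧ ¬ teq t s2 := by
  by_cases h1 : teq t s1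
  · rw [half_pos1 h1] at h; cases h
  · by_cases h2 : teq t s2
    · rw [half_pos2 h1 h2] at h; cases h
    · exact ⟨h1, h2⟩

lemma half_rank_lt {t s u : Term α} (h : half t s = some u) : t.rank < s.rank := by
  obtain ⟨s1, s2, rfl, hc⟩ := half_some h
  rcases hc with ⟨h1, _⟩ | ⟨h2, _⟩
  · rw [teq_rank h1]
    show s1.rank < max s1.rank s2.rank + 1
    exact Nat.lt_succ_of_le (Nat.le_max_left _ _)
  · rw [teq_rank h2]
    show s2.rank < max s1.rank s2.rank + 1
    exact Nat.lt_succ_of_le (Nat.le_max_right _ _)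

lemma half_eval {M : Type} [Steiner M] (e : α → M) {t s u : Term α}
    (h : half t s = some u) : u.eval e = t.eval e * s.eval e := by
  obtain ⟨s1, s2, rfl, hc⟩ := half_some h
  rcases hc with ⟨h1, hu⟩ | ⟨h2, hu⟩ <;> rw [hu]
  · show s2.eval e = t.eval e * (s1.eval e * s2.eval e)
    rw [teq_eval e h1, Steiner.lcancel]
  · show s1.eval e = t.eval e * (s1.eval e * s2.eval e)
    rw [teq_eval e h2, Steiner.comm (s1.eval e) (s2.eval e), Steiner.lcancel]

open Classical in
/-- Multiplication of reduced terms, producing a reduced term. -/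
noncomputable def mulR (t s : Term α) : Term α :=
  if teq t s then t else (half t s).getD ((half s t).getD (.mul t s))

lemma mulR_cases (t s : Term α) :
    (teq t s ∧ mulR t s = t) ∨
    (¬ teq t s ∧ ∃ u, half t s = some u ∧ mulR t s = u) ∨
    (¬ teq t s ∧ half t s = none ∧ ∃ u, half s t = some u ∧ mulR t s = u) ∨
    (¬ teq t s ∧ half t s = none ∧ half s t = none ∧ mulR t s = .mul t s) := by
  unfold mulR
  by_cases h : teq t s
  · exact Or.inl ⟨h, if_pos h⟩
  · rw [if_neg h]
    cases hts : half t s with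
    | some u => exact Or.inr (Or.inl ⟨h, u, rfl, rfl⟩)
    | none =>
      cases hst : half s t with
      | some u => exact Or.inr (Or.inr (Or.inl ⟨h, rfl, u, rfl, rfl⟩))
      | none => exact Or.inr (Or.inr (Or.inr ⟨h, rfl, rfl, rfl⟩))

lemma mulR_idem (t : Term α) : mulR t t = t := by
  unfold mulR; rw [if_pos (teq_refl t)]

lemma mulR_eval {M : Type} [Steiner M] (e : α → M) (t s : Term α) :
    (mulR t s).eval e = t.eval e * s.eval e := by
  rcases mulR_cases t s with ⟨h, e'⟩ | ⟨h, u, hu, e'⟩ | ⟨h, _, u, hu, e'⟩ | ⟨h, _, _, e'⟩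
  · rw [e', ← teq_eval e h, Steiner.idem]
  · rw [e', half_eval e hu]
  · rw [e', half_eval e hu, Steiner.comm]
  · rw [e']; rfl

lemma mulR_reduced {t s : Term α} (ht : Reduced t) (hs : Reduced s) :
    Reduced (mulR t s) := by
  rcases mulR_cases t s with ⟨h, e'⟩ | ⟨h, u, hu, e'⟩ | ⟨h, _, u, hu, e'⟩ | ⟨h, h1, h2, e'⟩
  · rw [e']; exact ht
  · rw [e']
    obtain ⟨s1, s2, rfl, hc⟩ := half_some hu
    rcases hc with ⟨_, rfl⟩ | ⟨_, rfl⟩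
    · exact hs.right
    · exact hs.left
  · rw [e']
    obtain ⟨t1, t2, rfl, hc⟩ := half_some hu
    rcases hc with ⟨_, rfl⟩ | ⟨_, rfl⟩
    · exact ht.right
    · exact ht.left
  · rw [e']
    refine reduced_mul ht hs h ?_ ?_
    · rintro s1 s2 rfl; exact half_none h1
    · rintro t1 t2 rfl
      have := half_none h2
      exact ⟨fun hq => this.1 (teq_symm hq), fun hq => this.2 (teq_symm hq)⟩

lemma mulR_of_reduced {t s : Term α} (h : Reduced (.mul t s)) : mulR t s = .mul t s := by
  have h1 : half t s = none := by
    cases s with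
    | var x => exact half_var
    | mul s1 s2 => exact half_neg h.r2.1 h.r2.2
  have h2 : half s t = none := by
    cases t with
    | var x => exact half_var
    | mul t1 t2 =>
      exact half_neg (fun hq => h.r3.1 (teq_symm hq)) (fun hq => h.r3.2 (teq_symm hq))
  unfold mulR
  rw [if_neg h.ne, h1, h2]; rfl

lemma half_respects {t t' s s' : Term α} (hs' : Reduced s') (htt : teq t t')
    (hss : teq s s') {u : Term α} (h : half t s = some u) :
    ∃ u', half t' s' = some u' ∧ teq u u' := by
  obtain ⟨s1, s2, rfl, hc⟩ := half_some h
  cases s' with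
  | var y => exact hss.elim
  | mul s1' s2' =>
    have hne12 : ¬ teq s1' s2' := hs'.ne
    rcases teq_pair hss with ⟨e1, e2⟩ | ⟨e1, e2⟩
    · rcases hc with ⟨h1, hu⟩ | ⟨h2, hu⟩ <;> rw [hu]
      · exact ⟨s2', half_pos1 (teq_trans (teq_trans (teq_symm htt) h1) e1), e2⟩
      · refine ⟨s1', half_pos2 ?_ (teq_trans (teq_trans (teq_symm htt) h2) e2), e1⟩
        intro hq
        exact hne12 (teq_trans (teq_symm hq)
          (teq_trans (teq_trans (teq_symm htt) h2) e2))
    · rcases hc with ⟨h1, hu⟩ | ⟨h2, hu⟩ <;> rw [hu]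
      · refine ⟨s1', half_pos2 ?_ (teq_trans (teq_trans (teq_symm htt) h1) e1), e2⟩
        intro hq
        exact hne12 (teq_trans (teq_symm hq)
          (teq_trans (teq_trans (teq_symm htt) h1) e1))
      · exact ⟨s2', half_pos1 (teq_trans (teq_trans (teq_symm htt) h2) e2), e1⟩

lemma half_none_respects {t t' s s' : Term α} (hs : Reduced s) (htt : teq t t')
    (hss : teq s s') (h : half t s = none) : half t' s' = none := by
  cases h' : half t' s' with
  | none => rfl
  | some u' =>
    obtain ⟨u, hu, _⟩ := half_respects hs (teq_symm htt) (teq_symm hss) h'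
    rw [h] at hu; cases hu

lemma mulR_respects {t t' s s' : Term α} (ht : Reduced t) (hs : Reduced s)
    (ht' : Reduced t') (hs' : Reduced s') (h1 : teq t t') (h2 : teq s s') :
    teq (mulR t s) (mulR t' s') := by
  rcases mulR_cases t s with ⟨a, e'⟩ | ⟨a, u, hu, e'⟩ | ⟨a, hn, u, hu, e'⟩ | ⟨a, hn1, hn2, e'⟩
  · rw [e']
    have a' : teq t' s' := teq_trans (teq_trans (teq_symm h1) a) h2
    rcases mulR_cases t' s' with ⟨_, e2⟩ | ⟨b, _⟩ | ⟨b, _⟩ | ⟨b, _⟩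
    · rw [e2]; exact h1
    all_goals exact absurd a' b
  · have a' : ¬ teq t' s' := fun hq => a (teq_trans (teq_trans h1 hq) (teq_symm h2))
    obtain ⟨u', hu', huu⟩ := half_respects hs' h1 h2 hu
    rw [e']
    rcases mulR_cases t' s' with ⟨b, _⟩ | ⟨_, v, hv, e2⟩ | ⟨_, hn, _⟩ | ⟨_, hn, _⟩
    · exact absurd b a'
    · rw [e2]; rw [hu'] at hv; cases hv; exact huu
    all_goals rw [hn] at hu'; cases hu'
  · have a' : ¬ teq t' s' := fun hq => a (teq_trans (teq_trans h1 hq) (teq_symm h2))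
    have hn' : half t' s' = none := half_none_respects hs h1 h2 hn
    obtain ⟨u', hu', huu⟩ := half_respects ht' h2 h1 hu
    rw [e']
    rcases mulR_cases t' s' with ⟨b, _⟩ | ⟨_, v, hv, _⟩ | ⟨_, _, v, hv, e2⟩ | ⟨_, _, hv, _⟩
    · exact absurd b a'
    · rw [hn'] at hv; cases hv
    · rw [e2]; rw [hu'] at hv; cases hv; exact huu
    · rw [hv] at hu'; cases hu'
  · have a' : ¬ teq t' s' := fun hq => a (teq_trans (teq_trans h1 hq) (teq_symm h2))
    have hn1' : half t' s' = none := half_none_respects hs h1 h2 hn1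
    have hn2' : half s' t' = none := half_none_respects ht h2 h1 hn2
    rw [e']
    rcases mulR_cases t' s' with ⟨b, _⟩ | ⟨_, v, hv, _⟩ | ⟨_, _, v, hv, _⟩ | ⟨_, _, _, e2⟩
    · exact absurd b a'
    · rw [hn1'] at hv; cases hv
    · rw [hn2'] at hv; cases hv
    · rw [e2]; exact Or.inl ⟨h1, h2⟩

lemma mulR_comm (t s : Term α) : teq (mulR t s) (mulR s t) := by
  rcases mulR_cases t s with ⟨a, e'⟩ | ⟨a, u, hu, e'⟩ | ⟨a, hn, u, hu, e'⟩ | ⟨a, hn1, hn2, e'⟩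
  · rw [e']
    rcases mulR_cases s t with ⟨_, e2⟩ | ⟨b, _⟩ | ⟨b, _⟩ | ⟨b, _⟩
    · rw [e2]; exact a
    all_goals exact absurd (teq_symm a) b
  · rw [e']
    rcases mulR_cases s t with ⟨b, _⟩ | ⟨_, v, hv, _⟩ | ⟨_, _, v, hv, e2⟩ | ⟨_, _, hv, _⟩
    · exact absurd (teq_symm b) a
    · exact absurd (Nat.lt_asymm (half_rank_lt hu)) (not_not_intro (half_rank_lt hv))
    · rw [e2]; rw [hu] at hv; cases hv; exact teq_refl _
    · rw [hv] at hu; cases hu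
  · rw [e']
    rcases mulR_cases s t with ⟨b, _⟩ | ⟨_, v, hv, e2⟩ | ⟨_, hv, _⟩ | ⟨_, hv, _⟩
    · exact absurd (teq_symm b) a
    · rw [e2]; rw [hu] at hv; cases hv; exact teq_refl _
    all_goals rw [hv] at hu; cases hu
  · rw [e']
    rcases mulR_cases s t with ⟨b, _⟩ | ⟨_, v, hv, _⟩ | ⟨_, _, v, hv, _⟩ | ⟨_, _, _, e2⟩
    · exact absurd (teq_symm b) a
    · rw [hn2] at hv; cases hv
    · rw [hn1] at hv; cases hv
    · rw [e2]; exact Or.inr ⟨teq_refl t, teq_refl s⟩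

lemma not_teq_mul_left {t1 t2 : Term α} : ¬ teq (.mul t1 t2) t1 := by
  intro h
  have := teq_rank h
  have h1 : t1.rank ≤ max t1.rank t2.rank := Nat.le_max_left _ _
  rw [show (Term.mul t1 t2).rank = max t1.rank t2.rank + 1 from rfl] at this
  omega

lemma not_teq_mul_right {t1 t2 : Term α} : ¬ teq (.mul t1 t2) t2 := by
  intro h
  have := teq_rank h
  have h1 : t2.rank ≤ max t1.rank t2.rank := Nat.le_max_right _ _
  rw [show (Term.mul t1 t2).rank = max t1.rank t2.rank + 1 from rfl] at this
  omega

lemma mulR_lcancel {t s : Term α} (ht : Reduced t) (hs : Reduced s) :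
    teq (mulR t (mulR t s)) s := by
  rcases mulR_cases t s with ⟨a, e'⟩ | ⟨a, u, hu, e'⟩ | ⟨a, hn, u, hu, e'⟩ | ⟨a, hn1, hn2, e'⟩
  · rw [e', mulR_idem]; exact a
  · rw [e']
    obtain ⟨s1, s2, rfl, hc⟩ := half_some hu
    have hne12 : ¬ teq s1 s2 := hs.ne
    rcases hc with ⟨h1, hu⟩ | ⟨h2, hu⟩ <;> rw [hu]
    · -- teq t s1 ; show teq (mulR t s2) (mul s1 s2)
      rcases mulR_cases t s2 with ⟨b, _⟩ | ⟨_, v, hv, _⟩ | ⟨_, _, v, hv, _⟩ | ⟨_, _, _, e2⟩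
      · exact absurd (teq_trans (teq_symm h1) b) hne12
      · obtain ⟨u1, u2, he, hc2⟩ := half_some hv
        subst he
        rcases hc2 with ⟨q, _⟩ | ⟨q, _⟩
        · exact absurd (teq_trans (teq_symm h1) q) hs.r2.1
        · exact absurd (teq_trans (teq_symm h1) q) hs.r2.2
      · obtain ⟨t1, t2, he, hc2⟩ := half_some hv
        subst he
        -- h1 : teq (mul t1 t2) s1 ; hc2 : teq s2 t1 ∨ teq s2 t2
        cases s1 with
        | var y => exact h1.elim
        | mul w1 w2 =>
          rcases teq_pair h1 with ⟨p1, p2⟩ | ⟨p1, p2⟩ <;>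
            rcases hc2 with ⟨q, _⟩ | ⟨q, _⟩
          · exact absurd (teq_symm (teq_trans q p1)) hs.r3.1
          · exact absurd (teq_symm (teq_trans q p2)) hs.r3.2
          · exact absurd (teq_symm (teq_trans q p1)) hs.r3.2
          · exact absurd (teq_symm (teq_trans q p2)) hs.r3.1
      · rw [e2]; exact Or.inl ⟨h1, teq_refl s2⟩
    · -- teq t s2 ; show teq (mulR t s1) (mul s1 s2)
      rcases mulR_cases t s1 with ⟨b, _⟩ | ⟨_, v, hv, _⟩ | ⟨_, _, v, hv, _⟩ | ⟨_, _, _, e2⟩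
      · exact absurd (teq_trans (teq_symm b) h2) hne12
      · obtain ⟨u1, u2, he, hc2⟩ := half_some hv
        subst he
        rcases hc2 with ⟨q, _⟩ | ⟨q, _⟩
        · exact absurd (teq_trans (teq_symm q) h2) hs.r3.1
        · exact absurd (teq_trans (teq_symm q) h2) hs.r3.2
      · obtain ⟨t1, t2, he, hc2⟩ := half_some hv
        subst he
        -- h2 : teq (mul t1 t2) s2 ; hc2 : teq s1 t1 ∨ teq s1 t2
        cases s2 with
        | var y => exact h2.elim
        | mul w1 w2 =>
          rcases teq_pair h2 with ⟨p1, p2⟩ | ⟨p1, p2⟩ <;>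
            rcases hc2 with ⟨q, _⟩ | ⟨q, _⟩
          · exact absurd (teq_trans q p1) hs.r2.1
          · exact absurd (teq_trans q p2) hs.r2.2
          · exact absurd (teq_trans q p1) hs.r2.2
          · exact absurd (teq_trans q p2) hs.r2.1
      · rw [e2]; exact Or.inr ⟨h2, teq_refl s1⟩
  · rw [e']
    obtain ⟨t1, t2, he, hc⟩ := half_some hu
    subst he
    have hne12 : ¬ teq t1 t2 := ht.ne
    rcases hc with ⟨q, hu⟩ | ⟨q, hu⟩ <;> rw [hu]
    · -- q : teq s t1, show teq (mulR (mul t1 t2) t2) s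
      rcases mulR_cases (Term.mul t1 t2) t2 with ⟨b, _⟩ | ⟨_, v, hv, _⟩ |
        ⟨_, _, v, hv, e2⟩ | ⟨_, _, hv, _⟩
      · exact absurd b not_teq_mul_right
      · have := half_rank_lt hv
        have h1 : t2.rank ≤ max t1.rank t2.rank := Nat.le_max_right _ _
        rw [show (Term.mul t1 t2).rank = max t1.rank t2.rank + 1 from rfl] at this
        omega
      · obtain ⟨w1, w2, he2, hc2⟩ := half_some hv
        injection he2 with e1 e2'
        subst e1; subst e2'
        rcases hc2 with ⟨q2, hv2⟩ | ⟨_, hv2⟩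
        · exact absurd (teq_symm q2) hne12
        · rw [e2, hv2]; exact teq_symm q
      · have := half_none hv
        exact absurd (teq_refl t2) this.2
    · -- q : teq s t2, show teq (mulR (mul t1 t2) t1) s
      rcases mulR_cases (Term.mul t1 t2) t1 with ⟨b, _⟩ | ⟨_, v, hv, _⟩ |
        ⟨_, _, v, hv, e2⟩ | ⟨_, _, hv, _⟩
      · exact absurd b not_teq_mul_left
      · have := half_rank_lt hv
        have h1 : t1.rank ≤ max t1.rank t2.rank := Nat.le_max_left _ _
        rw [show (Term.mul t1 t2).rank = max t1.rank t2.rank + 1 from rfl] at this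
        omega
      · obtain ⟨w1, w2, he2, hc2⟩ := half_some hv
        injection he2 with e1 e2'
        subst e1; subst e2'
        rcases hc2 with ⟨_, hv2⟩ | ⟨q2, hv2⟩
        · rw [e2, hv2]; exact teq_symm q
        · exact absurd q2 hne12
      · have := half_none hv
        exact absurd (teq_refl t1) this.1
  · rw [e']
    rcases mulR_cases t (Term.mul t s) with ⟨b, _⟩ | ⟨_, v, hv, e2⟩ |
      ⟨_, hv, _⟩ | ⟨_, hv, _⟩
    · exact absurd (teq_symm b) not_teq_mul_left
    · obtain ⟨w1, w2, he2, hc2⟩ := half_some hv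
      injection he2 with e1 e2'
      subst e1; subst e2'
      rcases hc2 with ⟨_, hv2⟩ | ⟨q2, hv2⟩
      · rw [e2, hv2]; exact teq_refl s
      · exact absurd q2 a
    all_goals
      have := half_none hv
      exact absurd (teq_refl t) this.1

/-! ### Normalization -/

lemma exists_reduced (t : Term α) :
    ∃ t' : Term α, Reduced t' ∧ ∀ (M : Type) [Steiner M] (e : α → M),
      t.eval e = t'.eval e := by
  induction t with
  | var x => exact ⟨.var x, reduced_var x, fun M _ e => rfl⟩
  | mul t s iht ihs =>
    obtain ⟨t', ht, het⟩ := iht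
    obtain ⟨s', hs, hes⟩ := ihs
    refine ⟨mulR t' s', mulR_reduced ht hs, fun M _ e => ?_⟩
    rw [mulR_eval]
    show t.eval e * s.eval e = t'.eval e * s'.eval e
    rw [het, hes]

/-! ### The free Steiner quasigroup on reduced terms -/

instance setoidRT (α : Type) : Setoid {t : Term α // Reduced t} :=
  ⟨fun a b => teq a.1 b.1, ⟨fun a => teq_refl a.1, teq_symm, teq_trans⟩⟩

/-- The free Steiner quasigroup on `α`. -/
abbrev FreeS (α : Type) : Type := Quotient (setoidRT α)

noncomputable instance : Steiner (FreeS α) where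
  mul := Quotient.lift₂
    (fun a b => (⟦⟨mulR a.1 b.1, mulR_reduced a.2 b.2⟩⟧ : FreeS α))
    (fun a b a' b' ha hb =>
      Quotient.sound (mulR_respects a.2 b.2 a'.2 b'.2 ha hb))
  comm x y := by
    obtain ⟨p, rfl⟩ := Quotient.exists_rep x
    obtain ⟨q, rfl⟩ := Quotient.exists_rep y
    exact Quotient.sound (mulR_comm p.1 q.1)
  idem x := by
    obtain ⟨p, rfl⟩ := Quotient.exists_rep x
    refine Quotient.sound ?_
    show teq (mulR p.1 p.1) p.1
    rw [mulR_idem]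
    exact teq_refl p.1
  lcancel x y := by
    obtain ⟨p, rfl⟩ := Quotient.exists_rep x
    obtain ⟨q, rfl⟩ := Quotient.exists_rep y
    exact Quotient.sound (mulR_lcancel p.2 q.2)

lemma FreeS_mul_mk {a b : {t : Term α // Reduced t}} :
    (⟦a⟧ * ⟦b⟧ : FreeS α) = ⟦⟨mulR a.1 b.1, mulR_reduced a.2 b.2⟩⟧ := rfl

lemma evalFS_reduced :
    ∀ (t : Term α) (h : Reduced t),
      Term.eval (fun x => (⟦⟨.var x, reduced_var x⟩⟧ : FreeS α)) t = ⟦⟨t, h⟩⟧ := by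
  intro t
  induction t with
  | var x => intro h; rfl
  | mul t s iht ihs =>
    intro h
    show Term.eval _ t * Term.eval _ s = _
    rw [iht h.left, ihs h.right, FreeS_mul_mk]
    exact congrArg (Quotient.mk _) (Subtype.ext (mulR_of_reduced h))

end Aux
open Steiner
/-- A tuple is independent iff non-equivalent reduced terms take different
values on it. -/
theorem stmt15 {M : Type} [Steiner M] {ι : Type} (a : ι → M) :
    IndepTuple a ↔ ∀ t r : Term ι, Reduced t → Reduced r → ¬ TEquiv t r →
      t.eval a ≠ r.eval a := by
  classical
  constructor
  · rintro ⟨hinj, hind⟩ t r ht hr hne heq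
    set f : ↥(Set.range a) → FreeS ι :=
      fun y => ⟦⟨.var (Exists.choose (Set.mem_range.1 y.2)), reduced_var _⟩⟧ with hf
    obtain ⟨g, hg⟩ := hind (FreeS ι) f
    have hmem : ∀ u : Term ι, u.eval a ∈ closure (Set.range a) :=
      fun u => eval_mem_closure a (fun i => Set.mem_range_self i) u
    have key : ∀ u : Term ι, g ⟨u.eval a, hmem u⟩ =
        Term.eval (fun x => (⟦⟨.var x, reduced_var x⟩⟧ : FreeS ι)) u := by
      intro u
      induction u with
      | var i =>
        have h := hg ⟨a i, Set.mem_range_self i⟩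
        have h2 : Exists.choose (Set.mem_range.1
            (⟨a i, Set.mem_range_self i⟩ : ↥(Set.range a)).2) = i :=
          hinj (Exists.choose_spec (Set.mem_range.1
            (⟨a i, Set.mem_range_self i⟩ : ↥(Set.range a)).2))
        rw [hf] at h
        simp only [h2] at h
        exact h
      | mul u v ihu ihv =>
        have hx : (⟨(Term.mul u v).eval a, hmem _⟩ : ↥(closure (Set.range a))) =
            (⟨u.eval a, hmem u⟩ * ⟨v.eval a, hmem v⟩ : ↥(closure (Set.range a))) := rfl
        rw [hx, map_mul, ihu, ihv]
        rfl
    have h1 := key t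
    have h2 := key r
    have hx : (⟨t.eval a, hmem t⟩ : ↥(closure (Set.range a))) = ⟨r.eval a, hmem r⟩ :=
      Subtype.ext heq
    rw [hx, h2] at h1
    rw [evalFS_reduced t ht, evalFS_reduced r hr] at h1
    exact hne (tequiv_of_teq (Quotient.exact h1.symm))
  · intro H
    have hinj : Function.Injective a := by
      intro i j hij
      by_contra hne
      refine H (.var i) (.var j) (reduced_var i) (reduced_var j) ?_ hij
      intro h
      exact hne (teq_of_tequiv h : i = j)
    refine ⟨hinj, ?_⟩
    intro N _ f
    have rep : ∀ x, x ∈ closure (Set.range a) → ∃ u : Term ι, u.eval a = x := by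
      intro x hx
      induction hx with
      | base h =>
        obtain ⟨i, rfl⟩ := h
        exact ⟨.var i, rfl⟩
      | mul hu hv ihu ihv =>
        obtain ⟨u, hu'⟩ := ihu
        obtain ⟨v, hv'⟩ := ihv
        exact ⟨.mul u v, by show u.eval a * v.eval a = _; rw [hu', hv']⟩
    have transfer : ∀ u v : Term ι, u.eval a = v.eval a → ∀ e : ι → N,
        u.eval e = v.eval e := by
      intro u v huv e
      obtain ⟨u', hu', heu⟩ := exists_reduced u
      obtain ⟨v', hv', hev⟩ := exists_reduced v
      have hq : TEquiv u' v' := by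
        by_contra hc
        exact H u' v' hu' hv' hc (by rw [← heu, ← hev]; exact huv)
      exact (heu N e).trans ((teq_eval e (teq_of_tequiv hq)).trans (hev N e).symm)
    set e : ι → N := fun i => f ⟨a i, Set.mem_range_self i⟩ with he
    refine ⟨⟨fun x => ((rep x.1 x.2).choose).eval e, ?_⟩, ?_⟩
    · intro x y
      have hx := (rep x.1 x.2).choose_spec
      have hy := (rep y.1 y.2).choose_spec
      have hxy := (rep (x * y).1 (x * y).2).choose_spec
      have heq2 : (rep (x * y).1 (x * y).2).choose.eval a =
          (Term.mul (rep x.1 x.2).choose (rep y.1 y.2).choose).eval a := by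
        rw [hxy]
        show x.1 * y.1 = _
        show _ = (rep x.1 x.2).choose.eval a * (rep y.1 y.2).choose.eval a
        rw [hx, hy]
      exact transfer _ _ heq2 e
    · intro x
      obtain ⟨i, hi⟩ := x.2
      have hspec := (rep x.1 (mem_closure.base x.2)).choose_spec
      have heq2 : (rep x.1 (mem_closure.base x.2)).choose.eval a =
          (Term.var i).eval a := by
        rw [hspec]; exact hi.symm
      have h2 := transfer _ _ heq2 e
      show (rep x.1 (mem_closure.base x.2)).choose.eval e = f x
      refine h2.trans ?_
      show e i = f x
      rw [he]
      exact congrArg f (Subtype.ext hi)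
end
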